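/- Let ω ∈ ℝ³ with θ = ‖ω‖ ≠ 0, let Ω = [ω]^∧, let A be any 3×2 real matrix, and let B be any 2×2 real matrix. Then Σ_{n=0}^{∞} Ω^{2n+1}AB/(2n+3)! = ((θ − sin θ)/θ³) · ΩAB and Σ_{n=0}^{∞} Ω^{2n}AB/(2n+2)! = AB/2 + ((θ²/2 − 1 + cos θ)/θ⁴) · Ω²AB, both series converging entrywise. -/

import Mathlib

open Matrix

/-- The hat map `[ω]^∧`: the skew-symmetric matrix satisfying `([ω]^∧) x = ω × x`. -/
noncomputable def hat (ω : EuclideanSpace ℝ (Fin 3)) : Matrix (Fin 3) (Fin 3) ℝ :=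
  !![0, -ω 2, ω 1; ω 2, 0, -ω 0; -ω 1, ω 0, 0]

/-- The 3×2 matrix with the two given columns. -/
noncomputable def cols (u w : Fin 3 → ℝ) : Matrix (Fin 3) (Fin 2) ℝ :=
  Matrix.of fun i j => ![u i, w i] j

/-!
Since `Ω³ = -θ² Ω`, every odd power `Ω^(2n+1)` is `(-θ²)ⁿ Ω` and every even power `Ω^(2n+2)` is
`(-θ²)ⁿ Ω²`. Both series therefore collapse to a scalar series times a fixed matrix, and the
scalar series are the tails of the Taylor series of `sin θ` and `cos θ`, divided by `θ³` and `θ⁴`.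
-/

open Nat Real

theorem hat_pow_three (ω : EuclideanSpace ℝ (Fin 3)) : hat ω ^ 3 = (-‖ω‖ ^ 2) • hat ω := by
  rw [EuclideanSpace.real_norm_sq_eq, Fin.sum_univ_three]
  ext i j
  fin_cases i <;> fin_cases j <;>
    simp [hat, pow_succ, Matrix.mul_apply, Fin.sum_univ_three] <;> ring

section PowThree

variable {R S : Type*} [Monoid R] [Monoid S] [MulAction S R] [IsScalarTower S R R]
  {X : R} {c : S}

theorem pow_two_mul_add_one_of_pow_three_eq_smul (h : X ^ 3 = c • X) (n : ℕ) :
    X ^ (2 * n + 1) = c ^ n • X := by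
  induction n with
  | zero => simp
  | succ n ih =>
    calc X ^ (2 * (n + 1) + 1) = X ^ (2 * n + 1) * X ^ 2 := by rw [← pow_add]; ring_nf
      _ = c ^ n • X ^ 3 := by rw [ih, smul_mul_assoc, pow_succ' X 2]
      _ = c ^ (n + 1) • X := by rw [h, smul_smul, ← pow_succ]

theorem pow_two_mul_add_two_of_pow_three_eq_smul (h : X ^ 3 = c • X) (n : ℕ) :
    X ^ (2 * n + 2) = c ^ n • X ^ 2 := by
  rw [pow_succ, pow_two_mul_add_one_of_pow_three_eq_smul h, smul_mul_assoc, ← sq]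

end PowThree

theorem hasSum_sin_remainder {θ : ℝ} (hθ : θ ≠ 0) :
    HasSum (fun n : ℕ => (-θ ^ 2) ^ n / ((2 * n + 3)! : ℝ)) ((θ - sin θ) / θ ^ 3) := by
  have tail := ((hasSum_nat_add_iff' 1).2 (hasSum_sin θ)).neg.div_const (θ ^ 3)
  convert tail using 1
  · rfl
  · ext n
    rw [show 2 * (n + 1) + 1 = 2 * n + 3 by ring]
    field_simp
    ring
  · simp

theorem hasSum_cos_remainder {θ : ℝ} (hθ : θ ≠ 0) :
    HasSum (fun n : ℕ => (-θ ^ 2) ^ n / ((2 * n + 4)! : ℝ))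
      ((θ ^ 2 / 2 - 1 + cos θ) / θ ^ 4) := by
  have tail := ((hasSum_nat_add_iff' 2).2 (hasSum_cos θ)).div_const (θ ^ 4)
  convert tail using 1
  · rfl
  · ext n
    rw [show 2 * (n + 2) = 2 * n + 4 by ring]
    field_simp
    ring
  · simp [Finset.sum_range_succ]
    ring

/-- `HasSum` on matrices (with the product topology) is exactly entrywise convergence. -/
theorem stmt12 (ω : EuclideanSpace ℝ (Fin 3)) (θ : ℝ) (hθ : θ = ‖ω‖) (hθ0 : θ ≠ 0)
    (Ω : Matrix (Fin 3) (Fin 3) ℝ) (hΩ : Ω = hat ω)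
    (A : Matrix (Fin 3) (Fin 2) ℝ) (B : Matrix (Fin 2) (Fin 2) ℝ) :
    HasSum (fun n : ℕ => (Nat.factorial (2 * n + 3) : ℝ)⁻¹ • (Ω ^ (2 * n + 1) * A * B))
      (((θ - Real.sin θ) / θ ^ 3) • (Ω * A * B)) ∧
    HasSum (fun n : ℕ => (Nat.factorial (2 * n + 2) : ℝ)⁻¹ • (Ω ^ (2 * n) * A * B))
      ((2 : ℝ)⁻¹ • (A * B) +
        ((θ ^ 2 / 2 - 1 + Real.cos θ) / θ ^ 4) • (Ω ^ 2 * A * B)) := by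
  have hcube : Ω ^ 3 = (-θ ^ 2) • Ω := by rw [hΩ, hθ]; exact hat_pow_three ω
  constructor
  · convert (hasSum_sin_remainder hθ0).smul_const (Ω * A * B) using 2 with n
    rw [pow_two_mul_add_one_of_pow_three_eq_smul hcube, Matrix.smul_mul, Matrix.smul_mul,
      smul_smul, div_eq_inv_mul]
  · have tail : HasSum (fun n : ℕ => ((2 * (n + 1) + 2)! : ℝ)⁻¹ • (Ω ^ (2 * (n + 1)) * A * B))
        (((θ ^ 2 / 2 - 1 + cos θ) / θ ^ 4) • (Ω ^ 2 * A * B)) := by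
      convert (hasSum_cos_remainder hθ0).smul_const (Ω ^ 2 * A * B) using 2 with n
      rw [mul_add_one, pow_two_mul_add_two_of_pow_three_eq_smul hcube, Matrix.smul_mul,
        Matrix.smul_mul, smul_smul, div_eq_inv_mul]
    convert HasSum.zero_add (f := fun n : ℕ => ((2 * n + 2)! : ℝ)⁻¹ • (Ω ^ (2 * n) * A * B)) tail
      using 2
    simp [Nat.factorial]
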